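/- Let I ⊂ ℝ be an interval and let p, a, b : I → ℂ be C¹ functions with |p(t)| < 1 for all t ∈ I that solve the reduced resonant system of the four-dimensional Schrödinger–Newton–Hooke equation, and let N, J, S denote the (constant) values of the conserved quantities N(t), J(t), S(t). Then the function y(t) = |p(t)|²/(1−|p(t)|²) is C¹ with locally Lipschitz derivative and satisfies, for all t ∈ I, the identity 256·y′(t)² = −(N² + 48S²)·y(t)² + (NJ + 4JS + 4NS − 48S²)·y(t) − (4S − J)²/4. Equivalently, y′² + ω²(y − y₀)² is constant along the flow with ω = √(N² + 48S²)/16, so that y — and hence |p|² and each |α_n|² on the invariant manifold — evolves as a harmonic oscillator and is periodic in time. -/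

import Mathlib

open Set

/-- `y = |p|²/(1-|p|²)`. -/
noncomputable def yv (p : ℝ → ℂ) (t : ℝ) : ℝ := ‖p t‖^2 / (1 - ‖p t‖^2)

/-- `y` as a complex number. -/
noncomputable def Yc (p : ℝ → ℂ) (t : ℝ) : ℂ := ((yv p t : ℝ) : ℂ)

/-- `(p, a, b)` (with derivatives `(pd, ad, bd)`) is a `C¹` solution on `I` of the
reduced resonant system of the four-dimensional Schrödinger–Newton–Hooke equation. -/
def RRS (I : Set ℝ) (p a b pd ad bd : ℝ → ℂ) : Prop :=
  (∀ t ∈ I, HasDerivAt p (pd t) t) ∧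
  (∀ t ∈ I, HasDerivAt a (ad t) t) ∧
  (∀ t ∈ I, HasDerivAt b (bd t) t) ∧
  ContinuousOn pd I ∧ ContinuousOn ad I ∧ ContinuousOn bd I ∧
  (∀ t ∈ I,
    Complex.I * pd t =
      (1/16) * (1 + Yc p t)^2 *
        (2 * ((‖a t‖^2 : ℝ) : ℂ) * p t * (1 + Yc p t) + a t * starRingEnd ℂ (b t)) ∧
    Complex.I * ad t =
      (1/16) * a t * (1 + Yc p t)^3 *
        (10 * ((‖a t‖^2 : ℝ) : ℂ) * (1 + 3 * Yc p t)
          + 20 * (((a t * starRingEnd ℂ (b t) * starRingEnd ℂ (p t)).re : ℝ) : ℂ)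
          + 4 * starRingEnd ℂ (a t) * b t * p t)
        + (7/16) * a t * (1 + Yc p t)^2 * ((‖b t‖^2 : ℝ) : ℂ) ∧
    Complex.I * bd t =
      (3/8) * a t * starRingEnd ℂ (p t) * (1 + Yc p t)^4 *
        (2 * (1 + 2 * Yc p t) * ((‖a t‖^2 : ℝ) : ℂ)
          + a t * starRingEnd ℂ (b t) * starRingEnd ℂ (p t))
        + b t * (1 + Yc p t)^2 *
          ((1 + Yc p t) * (1 + 3 * Yc p t) * ((‖a t‖^2 : ℝ) : ℂ)
            + ((‖b t‖^2 : ℝ) : ℂ) / 2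
            + 2 * (1 + Yc p t) * (((starRingEnd ℂ (a t) * b t * p t).re : ℝ) : ℂ)))

/-- The mass `N`. -/
noncomputable def Nval (p a b : ℝ → ℂ) (t : ℝ) : ℝ :=
  (1 + yv p t)^2 * (2 * (1 + yv p t) * (1 + 3 * yv p t) * ‖a t‖^2 + ‖b t‖^2
    + 4 * (1 + yv p t) * (starRingEnd ℂ (a t) * b t * p t).re)

/-- The linear energy `J`. -/
noncomputable def Jval (p a b : ℝ → ℂ) (t : ℝ) : ℝ :=
  (1 + yv p t)^2 * (2 * (1 + yv p t) * (1 + 9 * yv p t + 12 * (yv p t)^2) * ‖a t‖^2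
    + 2 * yv p t * ‖b t‖^2
    + 4 * (1 + yv p t) * (1 + 3 * yv p t) * (starRingEnd ℂ (a t) * b t * p t).re)

/-- The quantity `S = |a|²(1+y)⁴/2` encoding the Hamiltonian via `H = N² - 6S²`. -/
noncomputable def Sval (p a : ℝ → ℂ) (t : ℝ) : ℝ := ‖a t‖^2 * (1 + yv p t)^4 / 2

noncomputable def ydF (p a b : ℝ → ℂ) (t : ℝ) : ℝ :=
  (1/8) * (1 + yv p t)^4 * (a t * starRingEnd ℂ (b t) * starRingEnd ℂ (p t)).im

lemma key_re {p a b pd : ℝ → ℂ} {t : ℝ}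
    (e1 : Complex.I * pd t = (1/16) * (1 + Yc p t)^2 *
      (2 * ((‖a t‖^2 : ℝ) : ℂ) * p t * (1 + Yc p t) + a t * starRingEnd ℂ (b t))) :
    (starRingEnd ℂ (p t) * pd t).re =
      1/16 * (1 + yv p t)^2 * (a t * starRingEnd ℂ (b t) * starRingEnd ℂ (p t)).im := by
  have hcp : starRingEnd ℂ (p t) * p t = ((‖p t‖ : ℝ) : ℂ)^2 := by
    rw [mul_comm, Complex.mul_conj]
    simp [Complex.normSq_eq_norm_sq]
  have hY : (1 : ℂ) + Yc p t = ((1 + yv p t : ℝ) : ℂ) := by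
    rw [Yc]; push_cast; ring
  have e2 : Complex.I * (starRingEnd ℂ (p t) * pd t) =
      ((1/16 * (1 + yv p t)^2 * (2 * ‖a t‖^2 * ‖p t‖^2 * (1 + yv p t)) : ℝ) : ℂ)
      + ((1/16 * (1 + yv p t)^2 : ℝ) : ℂ) *
        (a t * starRingEnd ℂ (b t) * starRingEnd ℂ (p t)) := by
    have h0 : Complex.I * (starRingEnd ℂ (p t) * pd t)
        = starRingEnd ℂ (p t) * (Complex.I * pd t) := by ring
    rw [h0, e1, hY]
    push_cast
    linear_combination (1/8 * (1 + (yv p t : ℂ))^3 * ((‖a t‖ : ℝ) : ℂ)^2) * hcp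
  have e3 := congrArg Complex.im e2
  simp only [Complex.mul_im, Complex.add_im, Complex.mul_re, Complex.ofReal_re,
    Complex.ofReal_im, Complex.I_re, Complex.I_im, zero_mul, mul_zero, one_mul, zero_add,
    add_zero, mul_one, sub_zero, zero_sub, neg_zero] at e3 ⊢
  linear_combination e3

lemma yv_hasDeriv {p a b pd : ℝ → ℂ} {t : ℝ} (hp1 : ‖p t‖ < 1)
    (hpd : HasDerivAt p (pd t) t)
    (e1 : Complex.I * pd t = (1/16) * (1 + Yc p t)^2 *
      (2 * ((‖a t‖^2 : ℝ) : ℂ) * p t * (1 + Yc p t) + a t * starRingEnd ℂ (b t))) :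
    HasDerivAt (yv p) (ydF p a b t) t := by
  have hm1 : ‖p t‖^2 < 1 := by nlinarith [norm_nonneg (p t)]
  have hne : (1 : ℝ) - ‖p t‖^2 ≠ 0 := by intro h; nlinarith
  have hre : HasDerivAt (fun s => (p s).re) ((pd t).re) t :=
    Complex.reCLM.hasFDerivAt.comp_hasDerivAt t hpd
  have him : HasDerivAt (fun s => (p s).im) ((pd t).im) t :=
    Complex.imCLM.hasFDerivAt.comp_hasDerivAt t hpd
  have hnf : (fun s => ‖p s‖^2) = fun s => (p s).re * (p s).re + (p s).im * (p s).im := by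
    funext s
    rw [Complex.sq_norm, Complex.normSq_apply]
  have hn : HasDerivAt (fun s => ‖p s‖^2)
      (2 * (starRingEnd ℂ (p t) * pd t).re) t := by
    rw [hnf]
    have h2 := (hre.mul hre).add (him.mul him)
    refine h2.congr_deriv ?_
    simp [Complex.mul_re, Complex.conj_re, Complex.conj_im]
    ring
  have hdiv := hn.div ((hasDerivAt_const t (1:ℝ)).sub hn) hne
  have hyv : HasDerivAt (yv p)
      ((2 * (starRingEnd ℂ (p t) * pd t).re * (1 - ‖p t‖^2) -
        ‖p t‖^2 * (0 - 2 * (starRingEnd ℂ (p t) * pd t).re)) / (1 - ‖p t‖^2)^2) t := hdiv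
  convert hyv using 1
  have hk := key_re (a := a) (b := b) e1
  have hy1 : (1 + yv p t) * (1 - ‖p t‖^2) = 1 := by
    have hyy : yv p t = ‖p t‖^2 / (1 - ‖p t‖^2) := rfl
    obtain ⟨m, hm⟩ : ∃ m, ‖p t‖^2 = m := ⟨_, rfl⟩
    rw [hm] at hne
    rw [hyy, hm]
    field_simp
    ring
  rw [ydF, hk, eq_div_iff (pow_ne_zero 2 hne)]
  linear_combination ((1/8) * (1 + yv p t)^2 *
    (a t * starRingEnd ℂ (b t) * starRingEnd ℂ (p t)).im *
    ((1 + yv p t) * (1 - ‖p t‖^2) + 1)) * hy1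

noncomputable def zF (p a b : ℝ → ℂ) (t : ℝ) : ℂ :=
  a t * starRingEnd ℂ (b t) * starRingEnd ℂ (p t)

noncomputable def zdF (p a b pd ad bd : ℝ → ℂ) (t : ℝ) : ℂ :=
  (ad t * starRingEnd ℂ (b t) + a t * starRingEnd ℂ (bd t)) * starRingEnd ℂ (p t)
  + a t * starRingEnd ℂ (b t) * starRingEnd ℂ (pd t)

noncomputable def GF (p a b pd ad bd : ℝ → ℂ) (t : ℝ) : ℝ :=
  (1/8) * ((4 * (1 + yv p t)^3 * ydF p a b t) * (zF p a b t).im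
    + (1 + yv p t)^4 * (zdF p a b pd ad bd t).im)

lemma ydF_hasDeriv {p a b pd ad bd : ℝ → ℂ} {t : ℝ} (hp1 : ‖p t‖ < 1)
    (hpd : HasDerivAt p (pd t) t) (had : HasDerivAt a (ad t) t)
    (hbd : HasDerivAt b (bd t) t)
    (e1 : Complex.I * pd t = (1/16) * (1 + Yc p t)^2 *
      (2 * ((‖a t‖^2 : ℝ) : ℂ) * p t * (1 + Yc p t) + a t * starRingEnd ℂ (b t))) :
    HasDerivAt (ydF p a b) (GF p a b pd ad bd t) t := by
  have hy := yv_hasDeriv hp1 hpd e1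
  have h4 : HasDerivAt (fun s => (1 + yv p s)^4) (4 * (1 + yv p t)^3 * ydF p a b t) t := by
    have h := ((hasDerivAt_const t (1:ℝ)).add hy).pow 4
    refine h.congr_deriv ?_
    push_cast [Pi.add_apply]
    ring
  have hb' : HasDerivAt (fun s => starRingEnd ℂ (b s)) (starRingEnd ℂ (bd t)) t := by
    simpa only [starRingEnd_apply] using hbd.star
  have hp' : HasDerivAt (fun s => starRingEnd ℂ (p s)) (starRingEnd ℂ (pd t)) t := by
    simpa only [starRingEnd_apply] using hpd.star
  have hz : HasDerivAt (zF p a b) (zdF p a b pd ad bd t) t := (had.mul hb').mul hp'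
  have him : HasDerivAt (fun s => (zF p a b s).im) ((zdF p a b pd ad bd t).im) t :=
    Complex.imCLM.hasFDerivAt.comp_hasDerivAt t hz
  have hfun : ydF p a b = fun s => (1/8) * ((1 + yv p s)^4 * (zF p a b s).im) := by
    funext s
    rw [ydF, zF]
    ring
  rw [hfun]
  have h := (h4.mul him).const_mul (1/8 : ℝ)
  exact h

/-- Along solutions of the reduced resonant system of the four-dimensional
Schrödinger–Newton–Hooke equation, `y = |p|²/(1-|p|²)` is `C¹` with locally Lipschitz
derivative and satisfies the harmonic-oscillator identity
`256 y'² = -(N²+48S²) y² + (NJ+4JS+4NS-48S²) y - (4S-J)²/4`. -/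
theorem stmt19 (I : Set ℝ) (hI : I.OrdConnected)
    (p a b pd ad bd : ℝ → ℂ)
    (hp1 : ∀ t ∈ I, ‖p t‖ < 1)
    (hsys : RRS I p a b pd ad bd)
    (N J S : ℝ)
    (hN : ∀ t ∈ I, Nval p a b t = N)
    (hJ : ∀ t ∈ I, Jval p a b t = J)
    (hS : ∀ t ∈ I, Sval p a t = S) :
    (∀ t ∈ I, DifferentiableAt ℝ (yv p) t) ∧
    ContinuousOn (deriv (yv p)) I ∧
    (∀ t ∈ I, ∃ ε > (0:ℝ), ∃ K : NNReal,
      LipschitzOnWith K (deriv (yv p)) (Metric.ball t ε ∩ I)) ∧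
    (∀ t ∈ I,
      256 * (deriv (yv p) t)^2 =
        -(N^2 + 48 * S^2) * (yv p t)^2
          + (N * J + 4 * J * S + 4 * N * S - 48 * S^2) * yv p t
          - (4 * S - J)^2 / 4) := by
  obtain ⟨hp, ha, hb, hpdC, hadC, hbdC, heq⟩ := hsys
  have hyd : ∀ t ∈ I, HasDerivAt (yv p) (ydF p a b t) t := fun t ht =>
    yv_hasDeriv (hp1 t ht) (hp t ht) ((heq t ht).1)
  have hderiv : ∀ t ∈ I, deriv (yv p) t = ydF p a b t := fun t ht => (hyd t ht).deriv
  have hcp : ContinuousOn p I := fun t ht => ((hp t ht).continuousAt).continuousWithinAt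
  have hca : ContinuousOn a I := fun t ht => ((ha t ht).continuousAt).continuousWithinAt
  have hcb : ContinuousOn b I := fun t ht => ((hb t ht).continuousAt).continuousWithinAt
  have hcyv : ContinuousOn (yv p) I := fun t ht =>
    ((hyd t ht).differentiableAt.continuousAt).continuousWithinAt
  have hczF : ContinuousOn (zF p a b) I := by
    unfold zF
    simp only [starRingEnd_apply]
    exact (hca.mul hcb.star).mul hcp.star
  have hcydF : ContinuousOn (ydF p a b) I := by
    unfold ydF
    exact (continuousOn_const.mul ((continuousOn_const.add hcyv).pow 4)).mul
      (Complex.continuous_im.comp_continuousOn hczF)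
  have hczdF : ContinuousOn (zdF p a b pd ad bd) I := by
    unfold zdF
    simp only [starRingEnd_apply]
    exact (((hadC.mul hcb.star).add (hca.mul hbdC.star)).mul hcp.star).add
      ((hca.mul hcb.star).mul hpdC.star)
  have hcGF : ContinuousOn (GF p a b pd ad bd) I := by
    unfold GF
    exact continuousOn_const.mul
      ((((continuousOn_const.mul ((continuousOn_const.add hcyv).pow 3)).mul hcydF).mul
        (Complex.continuous_im.comp_continuousOn hczF)).add
      (((continuousOn_const.add hcyv).pow 4).mul
        (Complex.continuous_im.comp_continuousOn hczdF)))
  refine ⟨fun t ht => (hyd t ht).differentiableAt, hcydF.congr hderiv, ?_, ?_⟩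
  · intro t ht
    rcases Metric.continuousWithinAt_iff.mp (hcGF t ht) 1 one_pos with ⟨δ, hδ, hball⟩
    refine ⟨δ, hδ, ⟨|GF p a b pd ad bd t| + 1, by positivity⟩, ?_⟩
    have hconv : Convex ℝ (Metric.ball t δ ∩ I) := (convex_ball t δ).inter hI.convex
    have hlip : LipschitzOnWith ⟨|GF p a b pd ad bd t| + 1, by positivity⟩ (ydF p a b)
        (Metric.ball t δ ∩ I) := by
      refine hconv.lipschitzOnWith_of_nnnorm_hasDerivWithin_le
        (f' := GF p a b pd ad bd)
        (fun x hx => (ydF_hasDeriv (hp1 x hx.2) (hp x hx.2) (ha x hx.2) (hb x hx.2)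
          ((heq x hx.2).1)).hasDerivWithinAt) ?_
      intro x hx
      have h1 : dist (GF p a b pd ad bd x) (GF p a b pd ad bd t) < 1 :=
        hball hx.2 (by simpa [Real.dist_eq] using Metric.mem_ball.mp hx.1)
      rw [Real.dist_eq] at h1
      apply NNReal.coe_le_coe.mp
      simp only [coe_nnnorm, Real.norm_eq_abs, NNReal.coe_mk]
      change |GF p a b pd ad bd x| ≤ |GF p a b pd ad bd t| + 1
      have := abs_sub_abs_le_abs_sub (GF p a b pd ad bd x) (GF p a b pd ad bd t)
      linarith [abs_abs (GF p a b pd ad bd x)]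
    intro x hx y hy
    rw [edist_dist, edist_dist] at *
    have e1 : deriv (yv p) x = ydF p a b x := hderiv x hx.2
    have e2 : deriv (yv p) y = ydF p a b y := hderiv y hy.2
    calc ENNReal.ofReal (dist (deriv (yv p) x) (deriv (yv p) y))
        = ENNReal.ofReal (dist (ydF p a b x) (ydF p a b y)) := by rw [e1, e2]
      _ ≤ _ := by
          have := hlip hx hy
          rwa [edist_dist, edist_dist] at this
  · intro t ht
    rw [hderiv t ht, ← hN t ht, ← hJ t ht, ← hS t ht]
    have hm1 : ‖p t‖^2 < 1 := by nlinarith [norm_nonneg (p t), hp1 t ht]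
    have hne : (1:ℝ) - ‖p t‖^2 ≠ 0 := by intro h; nlinarith
    have hmy : ‖p t‖^2 * (1 + yv p t) = yv p t := by
      have hyy : yv p t = ‖p t‖^2 / (1 - ‖p t‖^2) := rfl
      obtain ⟨m, hm⟩ : ∃ m, ‖p t‖^2 = m := ⟨_, rfl⟩
      rw [hm] at hne
      rw [hyy, hm]
      field_simp
      ring
    have hz2 : (a t * starRingEnd ℂ (b t) * starRingEnd ℂ (p t)).im ^ 2
        = ‖a t‖^2 * ‖b t‖^2 * ‖p t‖^2 - ((starRingEnd ℂ (a t) * b t * p t).re)^2 := by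
      have h1 := Complex.sq_norm_sub_sq_re (a t * starRingEnd ℂ (b t) * starRingEnd ℂ (p t))
      have h2 : ‖a t * starRingEnd ℂ (b t) * starRingEnd ℂ (p t)‖^2
          = ‖a t‖^2 * ‖b t‖^2 * ‖p t‖^2 := by
        simp only [norm_mul, Complex.norm_conj]
        ring
      have h3eq : (a t * starRingEnd ℂ (b t) * starRingEnd ℂ (p t))
          = starRingEnd ℂ (starRingEnd ℂ (a t) * b t * p t) := by
        simp only [map_mul, Complex.conj_conj]
      have h3 : (a t * starRingEnd ℂ (b t) * starRingEnd ℂ (p t)).re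
          = ((starRingEnd ℂ) (a t) * b t * p t).re := by
        rw [h3eq, Complex.conj_re]
      rw [h3] at h1
      linarith [h1, h2]
    simp only [Nval, Jval, Sval, ydF]
    linear_combination (4*(1 + yv p t)^8) * hz2
      + (4*(1 + yv p t)^7 * ‖a t‖^2 * ‖b t‖^2) * hmy
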